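/- Let F(w) = a₋₁ w^{−α} + a₀ + Σ_{i=1}^N a_i w^{α_i} with α ∈ (0,1), 0 < α₁ < ⋯ < α_N and nonnegative coefficients, and let x, y ∈ ℝ^d with the origin not on the segment [y, x]. Then for γ(τ) = τx + (1−τ)y, ∫₀¹ F(|γ(τ)|) |x−y|² (1−α) dτ ≥ a_*(1−α)|x−y|^{α_N+2} / (2^{α_N+1}(α_N+1)), provided a_N ≥ a_* > 0. -/

import Mathlib

/-!
Write `γ τ = τ • x + (1 - τ) • y` and `β = α_N`. If `γ τ₀` is the foot of the perpendicular from
the origin to the line through `x` and `y`, Pythagoras gives `|τ - τ₀| * ‖x - y‖ ≤ ‖γ τ‖`, while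
nonnegativity of the coefficients gives `a_N * w ^ β ≤ F w`. So the integral is at least
`a_N * ‖x - y‖ ^ β * ∫₀¹ |τ - τ₀| ^ β`, and whatever `τ₀` is, one half of `[0, 1]` lies on one
side of it, which bounds the last integral below by `(1/2) ^ (β + 1) / (β + 1)`.
-/

open intervalIntegral MeasureTheory Real

lemma integral_half_one_rpow_sub_half {β : ℝ} (hβ : -1 < β) :
    ∫ τ in (1/2 : ℝ)..1, (τ - 1/2) ^ β = (1/2 : ℝ) ^ (β + 1) / (β + 1) := by
  rw [integral_comp_sub_right (fun s => s ^ β), integral_rpow (Or.inl hβ)]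
  norm_num [zero_rpow (by linarith : β + 1 ≠ 0)]

lemma half_rpow_div_le_integral_abs_sub_rpow_of_le_half {β c : ℝ} (hβ : 0 ≤ β)
    (hc : c ≤ 1/2) : (1/2 : ℝ) ^ (β + 1) / (β + 1) ≤ ∫ τ in (0 : ℝ)..1, |τ - c| ^ β := by
  have hcont : Continuous fun τ : ℝ => |τ - c| ^ β := by fun_prop (disch := exact Or.inr hβ)
  calc (1/2 : ℝ) ^ (β + 1) / (β + 1) = ∫ τ in (1/2 : ℝ)..1, (τ - 1/2) ^ β :=
        (integral_half_one_rpow_sub_half (by linarith)).symm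
    _ ≤ ∫ τ in (1/2 : ℝ)..1, |τ - c| ^ β := by
        refine integral_mono_on (by norm_num) ?_ (hcont.intervalIntegrable _ _) fun τ hτ => ?_
        · exact (Continuous.rpow_const (by fun_prop) fun _ => Or.inr hβ).intervalIntegrable _ _
        · exact rpow_le_rpow (by linarith [hτ.1]) ((by linarith : τ - 1/2 ≤ τ - c).trans
            (le_abs_self _)) hβ
    _ ≤ ∫ τ in (0 : ℝ)..1, |τ - c| ^ β :=
        integral_mono_interval (by norm_num) (by norm_num) le_rfl
          (Filter.Eventually.of_forall fun _ => rpow_nonneg (abs_nonneg _) _)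
          (hcont.intervalIntegrable _ _)

lemma half_rpow_div_le_integral_abs_sub_rpow {β : ℝ} (hβ : 0 ≤ β) (c : ℝ) :
    (1/2 : ℝ) ^ (β + 1) / (β + 1) ≤ ∫ τ in (0 : ℝ)..1, |τ - c| ^ β := by
  rcases le_total c (1/2) with hc | hc
  · exact half_rpow_div_le_integral_abs_sub_rpow_of_le_half hβ hc
  · have hreflect :
        ∫ τ in (0 : ℝ)..1, |τ - c| ^ β = ∫ τ in (0 : ℝ)..1, |τ - (1 - c)| ^ β := by
      have h := integral_comp_sub_left (fun τ => |τ - (1 - c)| ^ β) (a := 0) (b := 1) 1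
      norm_num only [sub_sub_sub_cancel_left, sub_zero, sub_self] at h
      simpa only [abs_sub_comm c] using h
    rw [hreflect]
    exact half_rpow_div_le_integral_abs_sub_rpow_of_le_half hβ (by linarith)

lemma exists_abs_sub_mul_norm_sub_le_norm_segment {E : Type*} [NormedAddCommGroup E]
    [InnerProductSpace ℝ E] (x y : E) :
    ∃ t₀ : ℝ, ∀ τ : ℝ, |τ - t₀| * ‖x - y‖ ≤ ‖τ • x + (1 - τ) • y‖ := by
  set u := x - y
  rcases eq_or_ne u 0 with hu | hu
  · exact ⟨0, fun τ => by simp [hu]⟩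
  -- `y + t₀ • u` is the foot of the perpendicular from `0` to the line through `x` and `y`.
  set t₀ := -inner ℝ y u / ‖u‖ ^ 2 with ht₀
  have horth : inner ℝ (y + t₀ • u) u = 0 := by
    rw [inner_add_left, real_inner_smul_left, real_inner_self_eq_norm_sq, ht₀,
      div_mul_cancel₀ _ (pow_ne_zero 2 (norm_ne_zero_iff.mpr hu)), add_neg_cancel]
  refine ⟨t₀, fun τ => ?_⟩
  have hdecomp : τ • x + (1 - τ) • y = (y + t₀ • u) + (τ - t₀) • u := by
    simp only [u]; module
  rw [← norm_eq_abs, ← norm_smul, mul_self_le_mul_self_iff (norm_nonneg _) (norm_nonneg _),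
    hdecomp, norm_add_sq_eq_norm_sq_add_norm_sq_real
      (by rw [real_inner_smul_right, horth, mul_zero])]
  exact le_add_of_nonneg_left (mul_self_nonneg _)

section GeneralizedPolynomial

variable {ι : Type*} [Fintype ι] (c a₀ α : ℝ) (a e : ι → ℝ)

lemma mul_rpow_le_generalized_polynomial (hc : 0 ≤ c) (ha₀ : 0 ≤ a₀) (ha : ∀ i, 0 ≤ a i)
    {w : ℝ} (hw : 0 ≤ w) (i : ι) :
    a i * w ^ e i ≤ c * w ^ (-α) + a₀ + ∑ j, a j * w ^ e j := by
  have hterm : ∀ j, 0 ≤ a j * w ^ e j := fun j => mul_nonneg (ha j) (rpow_nonneg hw _)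
  have := Finset.single_le_sum (fun j _ => hterm j) (Finset.mem_univ i)
  have := mul_nonneg hc (rpow_nonneg hw (-α))
  linarith

lemma continuousOn_generalized_polynomial :
    ContinuousOn (fun w => c * w ^ (-α) + a₀ + ∑ i, a i * w ^ e i) (Set.Ioi 0) := by
  intro w (hw : 0 < w)
  exact ContinuousAt.continuousWithinAt (by fun_prop (disch := exact Or.inl hw.ne'))

end GeneralizedPolynomial

lemma mul_norm_sub_rpow_le_integral_segment {E : Type*} [NormedAddCommGroup E]
    [InnerProductSpace ℝ E] {G : ℝ → ℝ} {b β : ℝ} (hb : 0 ≤ b) (hβ : 0 ≤ β)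
    (hG : ∀ w, 0 ≤ w → b * w ^ β ≤ G w) (x y : E)
    (hint : IntervalIntegrable (fun τ => G ‖τ • x + (1 - τ) • y‖) volume 0 1) :
    b * ‖x - y‖ ^ β * ((1/2 : ℝ) ^ (β + 1) / (β + 1)) ≤
      ∫ τ in (0 : ℝ)..1, G ‖τ • x + (1 - τ) • y‖ := by
  obtain ⟨t₀, ht₀⟩ := exists_abs_sub_mul_norm_sub_le_norm_segment x y
  have hcont : Continuous fun τ : ℝ => b * (|τ - t₀| * ‖x - y‖) ^ β := by
    fun_prop (disch := exact Or.inr hβ)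
  calc b * ‖x - y‖ ^ β * ((1/2 : ℝ) ^ (β + 1) / (β + 1))
      ≤ b * ‖x - y‖ ^ β * ∫ τ in (0 : ℝ)..1, |τ - t₀| ^ β :=
        mul_le_mul_of_nonneg_left (half_rpow_div_le_integral_abs_sub_rpow hβ t₀)
          (mul_nonneg hb (rpow_nonneg (norm_nonneg _) _))
    _ = ∫ τ in (0 : ℝ)..1, b * (|τ - t₀| * ‖x - y‖) ^ β := by
        rw [← intervalIntegral.integral_const_mul]
        congr 1 with τ
        rw [mul_rpow (abs_nonneg _) (norm_nonneg _)]
        ring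
    _ ≤ ∫ τ in (0 : ℝ)..1, G ‖τ • x + (1 - τ) • y‖ :=
        integral_mono_on zero_le_one (hcont.intervalIntegrable _ _) hint fun τ _ =>
          (mul_le_mul_of_nonneg_left (rpow_le_rpow (by positivity) (ht₀ τ) hβ) hb).trans
            (hG _ (norm_nonneg _))

theorem stmt15 (d : ℕ) (N : ℕ) (hN : 1 ≤ N)
    (α : ℝ) (hα1 : α < 1)
    (e : Fin N → ℝ) (hepos : ∀ i, 0 < e i)
    (astar : ℝ)
    (am1 a0 : ℝ) (a : Fin N → ℝ)
    (ham1 : 0 ≤ am1) (ha0 : 0 ≤ a0) (ha : ∀ i, 0 ≤ a i)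
    (haN : astar ≤ a ⟨N - 1, by omega⟩)
    (F : ℝ → ℝ)
    (hF : F = fun w => am1 * w ^ (-α) + a0 + ∑ i, a i * w ^ (e i))
    (x y : EuclideanSpace ℝ (Fin d))
    (hseg : ∀ τ ∈ Set.Icc (0:ℝ) 1, τ • x + (1 - τ) • y ≠ 0) :
    astar * (1 - α) * ‖x - y‖ ^ (e ⟨N - 1, by omega⟩ + 2) /
        (2 ^ (e ⟨N - 1, by omega⟩ + 1) * (e ⟨N - 1, by omega⟩ + 1)) ≤
      ∫ τ in (0:ℝ)..1, F ‖τ • x + (1 - τ) • y‖ * ‖x - y‖ ^ 2 * (1 - α) := by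
  set iN : Fin N := ⟨N - 1, by omega⟩
  set β := e iN
  have hβ : 0 ≤ β := (hepos _).le
  have hint : IntervalIntegrable (fun τ : ℝ => F ‖τ • x + (1 - τ) • y‖) volume 0 1 := by
    refine ContinuousOn.intervalIntegrable_of_Icc zero_le_one ?_
    rw [hF]
    exact (continuousOn_generalized_polynomial am1 a0 α a e).comp (by fun_prop)
      fun τ hτ => norm_pos_iff.mpr (hseg τ hτ)
  have hF_ge : ∀ w, 0 ≤ w → a iN * w ^ β ≤ F w := fun w hw => by
    rw [hF]
    exact mul_rpow_le_generalized_polynomial am1 a0 α a e ham1 ha0 ha hw iN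
  have hlower := mul_norm_sub_rpow_le_integral_segment (ha iN) hβ hF_ge x y hint
  have hscale : 0 ≤ ‖x - y‖ ^ 2 * (1 - α) := mul_nonneg (sq_nonneg _) (by linarith)
  calc astar * (1 - α) * ‖x - y‖ ^ (β + 2) / (2 ^ (β + 1) * (β + 1))
      = astar * ‖x - y‖ ^ β * ((1/2 : ℝ) ^ (β + 1) / (β + 1)) *
          (‖x - y‖ ^ 2 * (1 - α)) := by
        rw [rpow_add' (norm_nonneg _) (by linarith), div_rpow one_pos.le two_pos.le, one_rpow,
          rpow_two]
        field_simp
    _ ≤ a iN * ‖x - y‖ ^ β * ((1/2 : ℝ) ^ (β + 1) / (β + 1)) *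
          (‖x - y‖ ^ 2 * (1 - α)) := by gcongr
    _ ≤ ∫ τ in (0:ℝ)..1, F ‖τ • x + (1 - τ) • y‖ * ‖x - y‖ ^ 2 * (1 - α) := by
        simp_rw [mul_assoc _ (‖x - y‖ ^ 2), intervalIntegral.integral_mul_const]
        exact mul_le_mul_of_nonneg_right hlower hscale
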